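/- Suppose Col(D(μ)⁻¹ B(μ) H(μ)*) ⊆ Col(V) and Col((C(μ) D(μ)⁻¹)*) ⊆ Col(W) (the subspace construction used when m > p). Let v ∈ ℂ^m, w ∈ ℂ^p and σ > 0 satisfy H(μ) v = σ w and H(μ)* w = σ v (a pair of singular vectors of H(μ) with singular value σ). Then w* H′(μ) v = w* H̃′(μ) v. -/

import Mathlib

/-!
The reduced function `H̃ = (C V) (Wᴴ D V)⁻¹ (Wᴴ B)` is again of the form `C D⁻¹ B`, so both
derivatives at `μ` have the shape `C' X B - C X D' X B + C X B'`, with `X = D(μ)⁻¹` for `H` and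
`X = P := V (Wᴴ D(μ) V)⁻¹ Wᴴ` for `H̃`. Sandwiched between `wᴴ` and `v`, this expression sees
`X` only through `X B v` and `wᴴ C X`. Since `P D(μ)` fixes `Col V` and `D(μ) P` fixes the row
space of `Wᴴ`, these agree for the two choices of `X` as soon as `D⁻¹ B v ∈ Col V` and
`(C D⁻¹)ᴴ w ∈ Col W`; the first follows from `Hᴴ w = σ v` with `σ ≠ 0`.
-/

open Matrix

attribute [local instance] Matrix.normedAddCommGroup Matrix.normedSpace

open Filter Topology

section Calculus

variable {𝕜 : Type*} [NontriviallyNormedField 𝕜] {x : 𝕜}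

theorem HasDerivAt.matrix_mul [CompleteSpace 𝕜] {l m n : Type*} [Fintype l] [Fintype m]
    [Fintype n] {f : 𝕜 → Matrix l m 𝕜} {g : 𝕜 → Matrix m n 𝕜} {f' : Matrix l m 𝕜}
    {g' : Matrix m n 𝕜}
    (hf : HasDerivAt f f' x) (hg : HasDerivAt g g' x) :
    HasDerivAt (fun y => f y * g y) (f' * g x + f x * g') x := by
  let mulCLM : Matrix l m 𝕜 →L[𝕜] Matrix m n 𝕜 →L[𝕜] Matrix l n 𝕜 :=
    LinearMap.toContinuousLinearMap
      (LinearMap.toContinuousLinearMap.toLinearMap ∘ₗ mulLinearMap 𝕜)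
  rw [add_comm]
  exact mulCLM.hasDerivAt_of_bilinear (fun _ => hf) (fun _ => hg)

theorem HasDerivAt.matrix_mul_const [CompleteSpace 𝕜] {l m n : Type*} [Fintype l] [Fintype m]
    [Fintype n] {f : 𝕜 → Matrix l m 𝕜} {f' : Matrix l m 𝕜} (hf : HasDerivAt f f' x)
    (A : Matrix m n 𝕜) : HasDerivAt (fun y => f y * A) (f' * A) x := by
  simpa using hf.matrix_mul (hasDerivAt_const x A)

theorem HasDerivAt.const_matrix_mul [CompleteSpace 𝕜] {l m n : Type*} [Fintype l] [Fintype m]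
    [Fintype n] {g : 𝕜 → Matrix m n 𝕜} {g' : Matrix m n 𝕜} (A : Matrix l m 𝕜)
    (hg : HasDerivAt g g' x) : HasDerivAt (fun y => A * g y) (A * g') x := by
  simpa using (hasDerivAt_const x A).matrix_mul hg

theorem HasDerivAt.matrix_inv {n : Type*} [Fintype n] [DecidableEq n]
    {f : 𝕜 → Matrix n n 𝕜} {f' : Matrix n n 𝕜}
    (hf : HasDerivAt f f' x) (hx : IsUnit (f x)) :
    HasDerivAt (fun y => (f y)⁻¹) (-((f x)⁻¹ * f' * (f x)⁻¹)) x := by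
  have hdet : IsUnit (f x).det := (isUnit_iff_isUnit_det _).1 hx
  have hinv : ContinuousAt (fun y => (f y)⁻¹) x :=
    (continuousAt_matrix_inv _ (NormedRing.inverse_continuousAt hdet.unit)).comp
      hf.continuousAt
  have hunit : ∀ᶠ y in 𝓝 x, IsUnit (f y) := by
    filter_upwards [(continuous_id.matrix_det.continuousAt.comp hf.continuousAt).eventually_ne
      hdet.ne_zero] with y hy
    exact (isUnit_iff_isUnit_det _).2 (isUnit_iff_ne_zero.2 hy)
  replace hf := hasDerivAt_iff_tendsto_slope.1 hf
  refine hasDerivAt_iff_tendsto_slope.2 ?_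
  have hslope : ∀ᶠ y in 𝓝[≠] x,
      -((f y)⁻¹ * slope f x y * (f x)⁻¹) = slope (fun y => (f y)⁻¹) x y := by
    filter_upwards [nhdsWithin_le_nhds hunit] with y hy
    rw [slope_def_module, slope_def_module, Matrix.inv_sub_inv ⟨fun _ => hx, fun _ => hy⟩,
      Matrix.mul_smul, Matrix.smul_mul, ← smul_neg, ← Matrix.neg_mul, ← Matrix.mul_neg,
      neg_sub]
  exact (((hinv.tendsto.mono_left nhdsWithin_le_nhds).mul hf).mul
    tendsto_const_nhds).neg.congr' hslope

theorem HasDerivAt.matrix_mul_inv_mul [CompleteSpace 𝕜] {l m n : Type*} [Fintype l] [Fintype m]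
    [Fintype n] [DecidableEq n] {C : 𝕜 → Matrix l n 𝕜} {D : 𝕜 → Matrix n n 𝕜}
    {B : 𝕜 → Matrix n m 𝕜} {C' : Matrix l n 𝕜} {D' : Matrix n n 𝕜} {B' : Matrix n m 𝕜}
    (hC : HasDerivAt C C' x) (hD : HasDerivAt D D' x) (hB : HasDerivAt B B' x)
    (hDx : IsUnit (D x)) :
    HasDerivAt (fun y => C y * (D y)⁻¹ * B y)
      (C' * (D x)⁻¹ * B x - C x * (D x)⁻¹ * D' * (D x)⁻¹ * B x + C x * (D x)⁻¹ * B') x := by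
  convert (hC.matrix_mul (hD.matrix_inv hDx)).matrix_mul hB using 1
  simp only [Matrix.add_mul, Matrix.mul_neg, Matrix.neg_mul, Matrix.mul_assoc, sub_eq_add_neg]

end Calculus

theorem dotProduct_mulVec_resolvent_deriv_congr {R : Type*} [CommRing R] {l m n : Type*}
    [Fintype l] [Fintype m] [Fintype n] (C C' : Matrix l n R) (D' X Y : Matrix n n R)
    (B B' : Matrix n m R) {r : l → R} {v : m → R}
    (hX : (X * B) *ᵥ v = (Y * B) *ᵥ v) (hY : r ᵥ* (C * X) = r ᵥ* (C * Y)) :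
    r ⬝ᵥ ((C' * X * B - C * X * D' * X * B + C * X * B') *ᵥ v) =
      r ⬝ᵥ ((C' * Y * B - C * Y * D' * Y * B + C * Y * B') *ᵥ v) := by
  have expand : ∀ Z : Matrix n n R,
      r ⬝ᵥ ((C' * Z * B - C * Z * D' * Z * B + C * Z * B') *ᵥ v) =
        r ⬝ᵥ (C' *ᵥ ((Z * B) *ᵥ v)) - (r ᵥ* (C * Z)) ⬝ᵥ (D' *ᵥ ((Z * B) *ᵥ v)) +
          (r ᵥ* (C * Z)) ⬝ᵥ (B' *ᵥ v) := by
    intro Z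
    simp only [sub_mulVec, add_mulVec, dotProduct_sub, dotProduct_add, mulVec_mulVec,
      dotProduct_mulVec, vecMul_vecMul, Matrix.mul_assoc]
  rw [expand, expand, hX, hY]

section ObliqueProjection

variable {R : Type*} [CommRing R] {l m n k : Type*} [Fintype l] [Fintype m] [Fintype n]
  [Fintype k] [DecidableEq n] [DecidableEq k] {A : Matrix n n R} {V : Matrix n k R}

theorem mul_inv_mul_mul_mulVec_of_mem_range {Z : Matrix k n R} (hA : IsUnit A)
    (hZAV : IsUnit (Z * A * V)) {G : Matrix n m R} {v : m → R}
    (hv : (A⁻¹ * G) *ᵥ v ∈ LinearMap.range V.mulVecLin) :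
    (V * (Z * A * V)⁻¹ * Z * G) *ᵥ v = (A⁻¹ * G) *ᵥ v := by
  obtain ⟨z, hz⟩ := hv
  rw [mulVecLin_apply] at hz
  calc (V * (Z * A * V)⁻¹ * Z * G) *ᵥ v
      = (V * (Z * A * V)⁻¹ * Z * A) *ᵥ ((A⁻¹ * G) *ᵥ v) := by
        rw [mulVec_mulVec, Matrix.mul_assoc (V * (Z * A * V)⁻¹ * Z) A, ← Matrix.mul_assoc A,
          mul_nonsing_inv _ ((isUnit_iff_isUnit_det _).1 hA), Matrix.one_mul]
    _ = V *ᵥ (((Z * A * V)⁻¹ * (Z * A * V)) *ᵥ z) := by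
        rw [← hz, mulVec_mulVec, mulVec_mulVec]
        simp only [Matrix.mul_assoc]
    _ = (A⁻¹ * G) *ᵥ v := by
        rw [nonsing_inv_mul _ ((isUnit_iff_isUnit_det _).1 hZAV), one_mulVec, hz]

theorem vecMul_mul_mul_inv_mul_of_mem_range [StarRing R] {W : Matrix n k R} (hA : IsUnit A)
    (hWAV : IsUnit (Wᴴ * A * V)) {F : Matrix l n R} {w : l → R}
    (hw : (F * A⁻¹)ᴴ *ᵥ w ∈ LinearMap.range W.mulVecLin) :
    star w ᵥ* (F * (V * (Wᴴ * A * V)⁻¹ * Wᴴ)) = star w ᵥ* (F * A⁻¹) := by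
  obtain ⟨u, hu⟩ := hw
  have hrow : star w ᵥ* (F * A⁻¹) = star u ᵥ* Wᴴ := by
    have h := congrArg star hu
    rwa [mulVecLin_apply, star_mulVec, star_mulVec, conjTranspose_conjTranspose, eq_comm] at h
  calc star w ᵥ* (F * (V * (Wᴴ * A * V)⁻¹ * Wᴴ))
      = (star w ᵥ* (F * A⁻¹)) ᵥ* (A * (V * (Wᴴ * A * V)⁻¹ * Wᴴ)) := by
        rw [vecMul_vecMul, Matrix.mul_assoc F A⁻¹, ← Matrix.mul_assoc A⁻¹,
          nonsing_inv_mul _ ((isUnit_iff_isUnit_det _).1 hA), Matrix.one_mul]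
    _ = star u ᵥ* ((Wᴴ * A * V) * (Wᴴ * A * V)⁻¹ * Wᴴ) := by
        rw [hrow, vecMul_vecMul]
        simp only [Matrix.mul_assoc]
    _ = star w ᵥ* (F * A⁻¹) := by
        rw [mul_nonsing_inv _ ((isUnit_iff_isUnit_det _).1 hWAV), Matrix.one_mul, hrow]

end ObliqueProjection

theorem mulVec_mem_of_range_mul_conjTranspose_le {K : Type*} [Field K] [StarRing K]
    {n m p : Type*} [Fintype n] [Fintype m] [Fintype p]
    {X : Matrix n m K} {H : Matrix p m K} {S : Submodule K (n → K)}
    (hS : LinearMap.range (X * Hᴴ).mulVecLin ≤ S) {v : m → K} {w : p → K} {c : K}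
    (hc : c ≠ 0) (hw : Hᴴ *ᵥ w = c • v) : X *ᵥ v ∈ S := by
  have hmem : X *ᵥ (Hᴴ *ᵥ w) ∈ S := by
    rw [mulVec_mulVec]; exact hS ⟨w, rfl⟩
  rw [hw, mulVec_smul] at hmem
  simpa [hc] using S.smul_mem c⁻¹ hmem

theorem singular_value_derivative_interpolation_m_gt_p_general
    {n m p k : ℕ} (μ : ℂ)
    (B : ℂ → Matrix (Fin n) (Fin m) ℂ) (C : ℂ → Matrix (Fin p) (Fin n) ℂ)
    (D : ℂ → Matrix (Fin n) (Fin n) ℂ)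
    (hB : DifferentiableAt ℂ B μ) (hC : DifferentiableAt ℂ C μ)
    (hD : DifferentiableAt ℂ D μ)
    (hDμ : IsUnit (D μ))
    (V W : Matrix (Fin n) (Fin k) ℂ)
    (hWDV : IsUnit (Wᴴ * D μ * V))
    (hcolV : LinearMap.range ((D μ)⁻¹ * B μ * (C μ * (D μ)⁻¹ * B μ)ᴴ).mulVecLin ≤ LinearMap.range V.mulVecLin)
    (hcolW : LinearMap.range ((C μ * (D μ)⁻¹)ᴴ).mulVecLin ≤
      LinearMap.range W.mulVecLin)
    (v : Fin m → ℂ) (w : Fin p → ℂ) (σ : ℝ) (hσ : 0 < σ)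
    (hw : (C μ * (D μ)⁻¹ * B μ)ᴴ.mulVec w = (σ : ℂ) • v) :
    star w ⬝ᵥ (deriv (fun s => C s * (D s)⁻¹ * B s) μ).mulVec v =
      star w ⬝ᵥ (deriv (fun s => (C s * V) * (Wᴴ * D s * V)⁻¹ * (Wᴴ * B s)) μ).mulVec v := by
  set P := V * (Wᴴ * D μ * V)⁻¹ * Wᴴ
  have hPB : (P * B μ) *ᵥ v = ((D μ)⁻¹ * B μ) *ᵥ v :=
    mul_inv_mul_mul_mulVec_of_mem_range hDμ hWDV
      (mulVec_mem_of_range_mul_conjTranspose_le hcolV (by exact_mod_cast hσ.ne') hw)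
  have hCP : star w ᵥ* (C μ * P) = star w ᵥ* (C μ * (D μ)⁻¹) :=
    vecMul_mul_mul_inv_mul_of_mem_range hDμ hWDV (hcolW ⟨w, rfl⟩)
  have hfull := hC.hasDerivAt.matrix_mul_inv_mul hD.hasDerivAt hB.hasDerivAt hDμ
  have hred : HasDerivAt (fun s => (C s * V) * (Wᴴ * D s * V)⁻¹ * (Wᴴ * B s))
      (deriv C μ * P * B μ - C μ * P * deriv D μ * P * B μ + C μ * P * deriv B μ) μ := by
    convert (hC.hasDerivAt.matrix_mul_const V).matrix_mul_inv_mul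
      ((hD.hasDerivAt.const_matrix_mul Wᴴ).matrix_mul_const V)
      (hB.hasDerivAt.const_matrix_mul Wᴴ) hWDV using 1
    simp only [P, Matrix.mul_assoc]
    -- the two sides differ only in the instance path to `Mul ℂ`
    rfl
  rw [show deriv (fun s => C s * (D s)⁻¹ * B s) μ = _ from hfull.deriv,
    show deriv (fun s => (C s * V) * (Wᴴ * D s * V)⁻¹ * (Wᴴ * B s)) μ = _ from hred.deriv]
  exact (dotProduct_mulVec_resolvent_deriv_congr (C μ) (deriv C μ) (deriv D μ) P (D μ)⁻¹
    (B μ) (deriv B μ) hPB hCP).symm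

/-- Hermite interpolation of the derivative in the direction of a singular pair,
for the subspace construction used when `m > p`:
if `Col(D(μ)⁻¹ B(μ) H(μ)ᴴ) ⊆ Col(V)` and `Col((C(μ) D(μ)⁻¹)ᴴ) ⊆ Col(W)`,
and `H(μ) v = σ w`, `H(μ)ᴴ w = σ v` with `σ > 0`, then
`wᴴ H′(μ) v = wᴴ H̃′(μ) v`. -/
theorem singular_value_derivative_interpolation_m_gt_p
    {n m p k : ℕ} (μ : ℂ)
    (B : ℂ → Matrix (Fin n) (Fin m) ℂ) (C : ℂ → Matrix (Fin p) (Fin n) ℂ)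
    (D : ℂ → Matrix (Fin n) (Fin n) ℂ)
    (hB : DifferentiableAt ℂ B μ) (hC : DifferentiableAt ℂ C μ)
    (hD : DifferentiableAt ℂ D μ)
    (hDμ : IsUnit (D μ))
    (V W : Matrix (Fin n) (Fin k) ℂ)
    (hWDV : IsUnit (Wᴴ * D μ * V))
    (hcolV : LinearMap.range ((D μ)⁻¹ * B μ * (C μ * (D μ)⁻¹ * B μ)ᴴ).mulVecLin ≤ LinearMap.range V.mulVecLin)
    (hcolW : LinearMap.range ((C μ * (D μ)⁻¹)ᴴ).mulVecLin ≤
      LinearMap.range W.mulVecLin)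
    (v : Fin m → ℂ) (w : Fin p → ℂ) (σ : ℝ) (hσ : 0 < σ)
    (hv : (C μ * (D μ)⁻¹ * B μ).mulVec v = (σ : ℂ) • w)
    (hw : (C μ * (D μ)⁻¹ * B μ)ᴴ.mulVec w = (σ : ℂ) • v) :
    star w ⬝ᵥ (deriv (fun s => C s * (D s)⁻¹ * B s) μ).mulVec v =
      star w ⬝ᵥ (deriv (fun s => (C s * V) * (Wᴴ * D s * V)⁻¹ * (Wᴴ * B s)) μ).mulVec v :=
  singular_value_derivative_interpolation_m_gt_p_general μ B C D hB hC hD hDμ V W hWDV hcolV hcolW v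
    w σ hσ hw
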